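/- arXiv:0712.2270 — 2 statements merged into one kernel-verified Lean document; each statement's English description precedes it below -/
import Mathlib

section
/- The family S̃ is closed under countable unions: if (Sᵢ) is a sequence of members of S̃, then ⋃ᵢ Sᵢ ∈ S̃. Together with closure under complements and Ω ⊆ S̃, this shows S̃ is a σ-algebra. -/
open scoped symmDiff ENNReal
open Filter Set Topology

/-- The outer measure induced by `μ : Ω → ℝ≥0∞`:
`μ*(E) = inf { ∑ᵢ μ(Aᵢ) : E ⊆ ⋃ᵢ Aᵢ, each Aᵢ ∈ Ω }`. -/
noncomputable def muStar {X : Type*} (Ω : Set (Set X)) (μ : Set X → ℝ≥0∞) (E : Set X) : ℝ≥0∞ :=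
  ⨅ (A : ℕ → Set X) (_ : ∀ i, A i ∈ Ω) (_ : E ⊆ ⋃ i, A i), ∑' i, μ (A i)

/-- `S̃ = { S ⊆ X : ∃ (Bₙ) in Ω with μ*(Bₙ △ S) → 0 }`. -/
def Stilde {X : Type*} (Ω : Set (Set X)) (μ : Set X → ℝ≥0∞) : Set (Set X) :=
  {S | ∃ B : ℕ → Set X, (∀ n, B n ∈ Ω) ∧
    Tendsto (fun n => muStar Ω μ (B n ∆ S)) atTop (𝓝 0)}

/-! `S̃` is the closure of `Ω` for the pseudometric `d(A, B) = μ*(A △ B)`. Since `μ*` is an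
outer measure, `d` satisfies the triangle inequality and `d(⋃ Aᵢ, ⋃ Bᵢ) ≤ ∑ d(Aᵢ, Bᵢ)`, so
approximating each `Sᵢ` by `Bᵢ ∈ Ω` within `εᵢ`, with `∑ εᵢ < ε / 2`, reduces the claim to
countable unions of members of `Ω`. For those, the disjointed pieces `Dᵢ ∈ Ω` satisfy
`∑ μ(Dᵢ) ≤ μ(X) < ∞` by finite additivity, so the finite unions `⋃_{i<n} Dᵢ ∈ Ω` approximate
`⋃ Bᵢ` up to the tail `∑_{i≥n} μ(Dᵢ) → 0`. -/

open MeasureTheory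

section

variable {X : Type*} {Ω : Set (Set X)} {μ : Set X → ℝ≥0∞}

def IsCountablyAdditiveOn (Ω : Set (Set X)) (μ : Set X → ℝ≥0∞) : Prop :=
  ∀ A : ℕ → Set X, (∀ i, A i ∈ Ω) → Pairwise (Function.onFun Disjoint A) →
    (⋃ i, A i) ∈ Ω → μ (⋃ i, A i) = ∑' i, μ (A i)

theorem IsCountablyAdditiveOn.union_eq_add (hμadd : IsCountablyAdditiveOn Ω μ)
    (h0 : ∅ ∈ Ω) (hμ0 : μ ∅ = 0) {s t : Set X} (hs : s ∈ Ω) (ht : t ∈ Ω)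
    (hst_mem : s ∪ t ∈ Ω) (hst : Disjoint s t) : μ (s ∪ t) = μ s + μ t := by
  let f : ℕ → Set X := fun i => if i = 0 then s else if i = 1 then t else ∅
  have hf : ∀ i, f i ∈ Ω := fun i => by
    simp only [f]; split_ifs <;> first | exact hs | exact ht | exact h0
  have hdisj : Pairwise (Function.onFun Disjoint f) := by
    intro i j hij
    simp only [Function.onFun, f]
    split_ifs <;> first | omega | simp [hst.symm]
  have hU : ⋃ i, f i = s ∪ t :=
    (iUnion_subset fun i => by simp only [f]; split_ifs <;> simp).antisymm
      (union_subset (subset_iUnion f 0) (subset_iUnion f 1))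
  have hsum := hμadd f hf hdisj (hU ▸ hst_mem)
  rw [hU] at hsum
  rw [hsum, tsum_eq_sum (s := Finset.range 2) fun i hi => ?_]
  · simp [f, Finset.sum_range_succ]
  · simp only [Finset.mem_range, not_lt] at hi
    simp [f, hμ0, show i ≠ 0 by omega, show i ≠ 1 by omega]

noncomputable def IsCountablyAdditiveOn.addContent (hμadd : IsCountablyAdditiveOn Ω μ)
    (hΩ : IsSetRing Ω) (hμ0 : μ ∅ = 0) : AddContent ℝ≥0∞ Ω :=
  hΩ.addContent_of_union μ hμ0 fun hs ht =>
    hμadd.union_eq_add hΩ.empty_mem hμ0 hs ht (hΩ.union_mem hs ht)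

theorem tsum_addContent_le_of_subset {C : Set (Set X)} {m : AddContent ℝ≥0∞ C}
    (hC : IsSetRing C) {f : ℕ → Set X} (hf : ∀ i, f i ∈ C)
    (hdisj : Pairwise (Function.onFun Disjoint f)) {t : Set X} (ht : t ∈ C)
    (hft : ∀ i, f i ⊆ t) : ∑' i, m (f i) ≤ m t :=
  ENNReal.tsum_le_of_sum_range_le fun n => by
    rw [← addContent_biUnion_eq hC (fun i _ => hf i) (hdisj.set_pairwise _)]
    exact addContent_mono hC.isSetSemiring (hC.biUnion_mem _ fun i _ => hf i) ht
      (iUnion₂_subset fun i _ => hft i)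

theorem iUnion_diff_biUnion_range_subset (u : ℕ → Set X) (n : ℕ) :
    (⋃ i, u i) \ ⋃ i ∈ Finset.range n, u i ⊆ ⋃ i, u (i + n) := by
  rintro x ⟨hx, hxn⟩
  obtain ⟨j, hj⟩ := mem_iUnion.1 hx
  rw [← iUnion_ge_eq_iUnion_nat_add]
  exact mem_biUnion (not_lt.1 fun h => hxn (mem_biUnion (Finset.mem_range.2 h) hj)) hj

theorem muStar_le_tsum {E : Set X} {A : ℕ → Set X} (hA : ∀ i, A i ∈ Ω) (hE : E ⊆ ⋃ i, A i) :
    muStar Ω μ E ≤ ∑' i, μ (A i) :=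
  iInf₂_le_of_le A hA (iInf_le _ hE)

theorem muStar_eq_inducedOuterMeasure (h0 : ∅ ∈ Ω) (hμ0 : μ ∅ = 0) :
    muStar Ω μ = inducedOuterMeasure (fun s (_ : s ∈ Ω) => μ s) h0 hμ0 := by
  funext E
  rw [inducedOuterMeasure, OuterMeasure.ofFunction_eq_iInf_mem (P := (· ∈ Ω))
    _ _ (fun _ h => extend_eq_top _ h)]
  refine iInf_congr fun A => iInf_congr fun hA => iInf_congr fun _ => tsum_congr fun i => ?_
  exact (extend_eq (fun s (_ : s ∈ Ω) => μ s) (hA i)).symm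

theorem muStar_symmDiff_le_add (h0 : ∅ ∈ Ω) (hμ0 : μ ∅ = 0) (A B C : Set X) :
    muStar Ω μ (A ∆ C) ≤ muStar Ω μ (A ∆ B) + muStar Ω μ (B ∆ C) := by
  rw [muStar_eq_inducedOuterMeasure h0 hμ0]
  exact (measure_mono (symmDiff_triangle A B C)).trans (measure_union_le _ _)

theorem muStar_iUnion_symmDiff_iUnion_le (h0 : ∅ ∈ Ω) (hμ0 : μ ∅ = 0) (A B : ℕ → Set X) :
    muStar Ω μ ((⋃ i, A i) ∆ ⋃ i, B i) ≤ ∑' i, muStar Ω μ (A i ∆ B i) := by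
  rw [muStar_eq_inducedOuterMeasure h0 hμ0]
  exact (measure_mono iSup_symmDiff_iSup_le).trans (measure_iUnion_le _)

theorem mem_Stilde_iff {S : Set X} :
    S ∈ Stilde Ω μ ↔ ∀ ε ≠ 0, ∃ B ∈ Ω, muStar Ω μ (B ∆ S) ≤ ε := by
  constructor
  · rintro ⟨B, hB, hlim⟩ ε hε
    obtain ⟨n, hn⟩ := (hlim.eventually_le_const (pos_iff_ne_zero.2 hε)).exists
    exact ⟨B n, hB n, hn⟩
  · intro h
    choose B hB hBS using fun n : ℕ =>
      h (n : ℝ≥0∞)⁻¹ (ENNReal.inv_ne_zero.2 (ENNReal.natCast_ne_top n))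
    exact ⟨B, hB, tendsto_of_tendsto_of_tendsto_of_le_of_le tendsto_const_nhds
      ENNReal.tendsto_inv_nat_nhds_zero (fun _ => zero_le) hBS⟩

theorem subset_Stilde (h0 : ∅ ∈ Ω) (hμ0 : μ ∅ = 0) : Ω ⊆ Stilde Ω μ := by
  intro A hA
  refine ⟨fun _ => A, fun _ => hA, ?_⟩
  simp only [symmDiff_self, bot_eq_empty, muStar_eq_inducedOuterMeasure h0 hμ0, measure_empty]
  exact tendsto_const_nhds

theorem compl_mem_Stilde (hcompl : ∀ A ∈ Ω, Aᶜ ∈ Ω) {S : Set X} (hS : S ∈ Stilde Ω μ) :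
    Sᶜ ∈ Stilde Ω μ := by
  obtain ⟨B, hB, hlim⟩ := hS
  exact ⟨fun n => (B n)ᶜ, fun n => hcompl _ (hB n), by simpa only [compl_symmDiff_compl]⟩

theorem iUnion_mem_Stilde_of_mem (hΩ : IsSetAlgebra Ω) (hμ0 : μ ∅ = 0)
    (hμadd : IsCountablyAdditiveOn Ω μ) (hμfin : μ univ ≠ ∞) {B : ℕ → Set X}
    (hB : ∀ i, B i ∈ Ω) : (⋃ i, B i) ∈ Stilde Ω μ := by
  set D := disjointed B
  have hD : ∀ i, D i ∈ Ω := hΩ.isSetRing.disjointed_mem hB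
  have hsum : ∑' i, μ (D i) ≠ ∞ :=
    ne_top_of_le_ne_top hμfin <| tsum_addContent_le_of_subset
      (m := hμadd.addContent hΩ.isSetRing hμ0) hΩ.isSetRing hD
      (disjoint_disjointed B) hΩ.univ_mem fun _ => subset_univ _
  refine ⟨fun n => ⋃ i ∈ Finset.range n, D i,
    fun n => hΩ.isSetRing.biUnion_mem _ fun i _ => hD i,
    tendsto_of_tendsto_of_tendsto_of_le_of_le tendsto_const_nhds
      (ENNReal.tendsto_sum_nat_add _ hsum) (fun _ => zero_le) fun n => ?_⟩
  rw [← iUnion_disjointed, symmDiff_of_le (iUnion₂_subset_iUnion _ _)]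
  exact muStar_le_tsum (fun i => hD (i + n)) (iUnion_diff_biUnion_range_subset D n)

theorem iUnion_mem_Stilde (hΩ : IsSetAlgebra Ω) (hμ0 : μ ∅ = 0)
    (hμadd : IsCountablyAdditiveOn Ω μ) (hμfin : μ univ ≠ ∞) {S : ℕ → Set X}
    (hS : ∀ i, S i ∈ Stilde Ω μ) : (⋃ i, S i) ∈ Stilde Ω μ := by
  refine mem_Stilde_iff.2 fun ε hε => ?_
  have hε2 : ε / 2 ≠ 0 := ENNReal.half_pos hε |>.ne'
  obtain ⟨δ, hδ, hδε⟩ := ENNReal.exists_pos_sum_of_countable' hε2 ℕ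
  choose B hB hBS using fun i => mem_Stilde_iff.1 (hS i) (δ i) (hδ i).ne'
  obtain ⟨C, hC, hCB⟩ := mem_Stilde_iff.1 (iUnion_mem_Stilde_of_mem hΩ hμ0 hμadd hμfin hB) _ hε2
  refine ⟨C, hC, ?_⟩
  calc muStar Ω μ (C ∆ ⋃ i, S i)
      ≤ muStar Ω μ (C ∆ ⋃ i, B i) + muStar Ω μ ((⋃ i, B i) ∆ ⋃ i, S i) :=
        muStar_symmDiff_le_add hΩ.empty_mem hμ0 _ _ _
    _ ≤ ε / 2 + ∑' i, muStar Ω μ (B i ∆ S i) :=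
        add_le_add hCB (muStar_iUnion_symmDiff_iUnion_le hΩ.empty_mem hμ0 B S)
    _ ≤ ε / 2 + ε / 2 := add_le_add le_rfl ((ENNReal.tsum_le_tsum hBS).trans hδε.le)
    _ = ε := ENNReal.add_halves ε

end

theorem stmt_11_general {X : Type*} (Ω : Set (Set X)) (μ : Set X → ℝ≥0∞)
    (hΩempty : ∅ ∈ Ω)
    (hΩcompl : ∀ A ∈ Ω, Aᶜ ∈ Ω) (hΩunion : ∀ A ∈ Ω, ∀ B ∈ Ω, A ∪ B ∈ Ω)
    (hμempty : μ ∅ = 0) (hμfin : μ Set.univ < ⊤)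
    (hμadd : ∀ A : ℕ → Set X, (∀ i, A i ∈ Ω) → Pairwise (Function.onFun Disjoint A) →
      (⋃ i, A i) ∈ Ω → μ (⋃ i, A i) = ∑' i, μ (A i)) :
    (∀ S : ℕ → Set X, (∀ i, S i ∈ Stilde Ω μ) → (⋃ i, S i) ∈ Stilde Ω μ) ∧
      (∀ S ∈ Stilde Ω μ, Sᶜ ∈ Stilde Ω μ) ∧ Ω ⊆ Stilde Ω μ := by
  have hΩ : IsSetAlgebra Ω :=
    ⟨hΩempty, fun A hA => hΩcompl A hA, fun A B hA hB => hΩunion A hA B hB⟩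
  exact ⟨fun S hS => iUnion_mem_Stilde hΩ hμempty hμadd hμfin.ne hS,
    fun S hS => compl_mem_Stilde hΩcompl hS, subset_Stilde hΩempty hμempty⟩

/-- `S̃` is closed under countable unions; together with closure under complements
and `Ω ⊆ S̃`, this shows `S̃` is a σ-algebra. -/
theorem stmt_11 {X : Type*} (Ω : Set (Set X)) (μ : Set X → ℝ≥0∞)
    (hΩempty : ∅ ∈ Ω) (hΩuniv : Set.univ ∈ Ω)
    (hΩcompl : ∀ A ∈ Ω, Aᶜ ∈ Ω) (hΩunion : ∀ A ∈ Ω, ∀ B ∈ Ω, A ∪ B ∈ Ω)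
    (hμempty : μ ∅ = 0) (hμfin : μ Set.univ < ⊤)
    (hμadd : ∀ A : ℕ → Set X, (∀ i, A i ∈ Ω) → Pairwise (Function.onFun Disjoint A) →
      (⋃ i, A i) ∈ Ω → μ (⋃ i, A i) = ∑' i, μ (A i)) :
    (∀ S : ℕ → Set X, (∀ i, S i ∈ Stilde Ω μ) → (⋃ i, S i) ∈ Stilde Ω μ) ∧
      (∀ S ∈ Stilde Ω μ, Sᶜ ∈ Stilde Ω μ) ∧ Ω ⊆ Stilde Ω μ :=
  stmt_11_general Ω μ hΩempty hΩcompl hΩunion hμempty hμfin hμadd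
end

section
/- A subset E ⊆ X is Caratheodory measurable with respect to μ* (i.e., for every A ⊆ X, μ*(A) = μ*(A ∩ E) + μ*(A ∩ Eᶜ)) if and only if E ∈ S̃. -/
open scoped symmDiff ENNReal
open Filter Set Topology

/-!
`μ*` is the outer measure induced by the additive content `μ` extended by `∞` off `Ω`. Members
of `Ω` are Carathéodory measurable, and Carathéodory measurability passes to limits for the
pseudometric `μ*(· ∆ ·)`: the Carathéodory identity at `B` holds at `E` up to `2 μ*(B ∆ E)`.
Conversely, if `E` is Carathéodory measurable, cover it by `Aᵢ ∈ Ω` with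
`∑ μ(Aᵢ) < μ*(E) + ε` and put `U = ⋃ Aᵢ`. Splitting `U` along `E` gives `μ*(U \ E) < ε` (here
`μ*(E) < ∞` is needed), a finite union `B` of the `Aᵢ` has `μ*(U \ B) < ε`, and
`B ∆ E ⊆ (U \ E) ∪ (U \ B)`.
-/

namespace MeasureTheory

variable {α : Type*}

theorem union_eq_add_of_iUnion_eq_tsum {C : Set (Set α)} {m : Set α → ℝ≥0∞}
    (hC : ∅ ∈ C) (hm : m ∅ = 0)
    (hm_add : ∀ A : ℕ → Set α, (∀ i, A i ∈ C) → Pairwise (Function.onFun Disjoint A) →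
      (⋃ i, A i) ∈ C → m (⋃ i, A i) = ∑' i, m (A i))
    {s t : Set α} (hs : s ∈ C) (ht : t ∈ C) (hst : s ∪ t ∈ C) (hd : Disjoint s t) :
    m (s ∪ t) = m s + m t := by
  have h := hm_add (fun i => ⋃ b ∈ Encodable.decode₂ Bool i, cond b s t)
    (fun i => Encodable.iUnion_decode₂_cases hC (Bool.forall_bool.2 ⟨ht, hs⟩))
    (Encodable.iUnion_decode₂_disjoint_on (pairwise_disjoint_on_bool.2 hd))
    (by rwa [Encodable.iUnion_decode₂, ← union_eq_iUnion])
  rw [Encodable.iUnion_decode₂, ← union_eq_iUnion, tsum_iUnion_decode₂ m hm, tsum_fintype] at h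
  simpa [add_comm] using h

namespace OuterMeasure

theorem measure_inter_le_inter_add_symmDiff (ν : OuterMeasure α) (A B E : Set α) :
    ν (A ∩ E) ≤ ν (A ∩ B) + ν (B ∆ E) := by
  have hsub : A ∩ E ⊆ A ∩ B ∪ B ∆ E := by
    rintro x ⟨hxA, hxE⟩
    by_cases hxB : x ∈ B
    · exact Or.inl ⟨hxA, hxB⟩
    · exact Or.inr (Or.inr ⟨hxE, hxB⟩)
  exact (measure_mono hsub).trans (measure_union_le _ _)

theorem measure_diff_le_diff_add_symmDiff (ν : OuterMeasure α) (A B E : Set α) :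
    ν (A \ E) ≤ ν (A \ B) + ν (B ∆ E) := by
  simpa only [sdiff_eq, compl_symmDiff_compl] using
    ν.measure_inter_le_inter_add_symmDiff A Bᶜ Eᶜ

theorem isCaratheodory_of_tendsto_symmDiff (ν : OuterMeasure α) {B : ℕ → Set α} {E : Set α}
    (hB : ∀ n, ν.IsCaratheodory (B n)) (hBE : Tendsto (fun n => ν (B n ∆ E)) atTop (𝓝 0)) :
    ν.IsCaratheodory E := by
  refine ν.isCaratheodory_iff_le'.2 fun A => ?_
  have hle : ∀ n, ν (A ∩ E) + ν (A \ E) ≤ ν A + (ν (B n ∆ E) + ν (B n ∆ E)) := fun n =>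
    calc ν (A ∩ E) + ν (A \ E)
        ≤ ν (A ∩ B n) + ν (B n ∆ E) + (ν (A \ B n) + ν (B n ∆ E)) :=
          add_le_add (ν.measure_inter_le_inter_add_symmDiff _ _ _)
            (ν.measure_diff_le_diff_add_symmDiff _ _ _)
      _ = ν A + (ν (B n ∆ E) + ν (B n ∆ E)) := by rw [hB n A]; ring
  exact ge_of_tendsto (by simpa using tendsto_const_nhds.add (hBE.add hBE))
    (Eventually.of_forall hle)

theorem measure_iUnion_diff_biUnion_range_le (ν : OuterMeasure α) (f : ℕ → Set α) (N : ℕ) :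
    ν ((⋃ i, f i) \ ⋃ i ∈ Finset.range N, f i) ≤ ∑' i, ν (f (i + N)) := by
  have hsub : (⋃ i, f i) \ ⋃ i ∈ Finset.range N, f i ⊆ ⋃ i, f (i + N) := by
    rintro x ⟨hxU, hxN⟩
    obtain ⟨i, hxi⟩ := mem_iUnion.1 hxU
    have hNi : N ≤ i := not_lt.1 fun hi => hxN (mem_biUnion (Finset.mem_range.2 hi) hxi)
    exact mem_iUnion.2 ⟨i - N, by rwa [Nat.sub_add_cancel hNi]⟩
  exact (measure_mono hsub).trans (measure_iUnion_le _)

end OuterMeasure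

namespace AddContent

variable {C : Set (Set α)} (m : AddContent ℝ≥0∞ C)

local notation "ν" => OuterMeasure.ofFunction m addContent_empty

theorem exists_cover_tsum_lt_ofFunction_add (m_top : ∀ s ∉ C, m s = ∞) {s : Set α}
    (hs : ν s ≠ ∞) {ε : ℝ≥0∞} (hε : ε ≠ 0) :
    ∃ f : ℕ → Set α, (∀ i, f i ∈ C) ∧ s ⊆ ⋃ i, f i ∧ ∑' i, m (f i) < ν s + ε := by
  have h := ENNReal.lt_add_right hs hε
  conv at h => lhs; rw [OuterMeasure.ofFunction_eq_iInf_mem _ _ m_top]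
  simpa only [iInf_lt_iff, exists_prop] using h

theorem exists_mem_ofFunction_symmDiff_lt (hC : IsSetRing C) (m_top : ∀ s ∉ C, m s = ∞)
    {E : Set α} (hE : OuterMeasure.IsCaratheodory ν E) (hνE : ν E ≠ ∞) {ε : ℝ≥0∞} (hε : ε ≠ 0) :
    ∃ B ∈ C, ν (B ∆ E) < ε := by
  rcases eq_or_ne ε ∞ with rfl | hε_top
  · exact ⟨∅, hC.empty_mem, by rwa [← bot_eq_empty, bot_symmDiff, lt_top_iff_ne_top]⟩
  have hε2 : ε / 2 ≠ 0 := (ENNReal.half_pos hε).ne'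
  obtain ⟨f, hfC, hEU, hf⟩ := exists_cover_tsum_lt_ofFunction_add m m_top hνE hε2
  set U := ⋃ i, f i
  have hf_top : ∑' i, m (f i) ≠ ∞ :=
    (hf.trans (ENNReal.add_lt_top.2 ⟨hνE.lt_top, ENNReal.div_lt_top hε_top two_ne_zero⟩)).ne
  obtain ⟨N, hN⟩ : ∃ N, ∑' i, m (f (i + N)) < ε / 2 :=
    ((tendsto_order.1 (ENNReal.tendsto_sum_nat_add _ hf_top)).2 _ hε2.bot_lt).exists
  set B := ⋃ i ∈ Finset.range N, f i
  have hUE : ν (U \ E) < ε / 2 := by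
    have hνU : ν U ≤ ∑' i, m (f i) :=
      (measure_iUnion_le _).trans (ENNReal.tsum_le_tsum fun i => OuterMeasure.ofFunction_le _)
    have hsplit := hE U
    rw [inter_eq_right.2 hEU] at hsplit
    exact (ENNReal.add_lt_add_iff_left hνE).1 (hsplit ▸ hνU.trans_lt hf)
  have hUB : ν (U \ B) < ε / 2 :=
    ((OuterMeasure.measure_iUnion_diff_biUnion_range_le _ f N).trans
      (ENNReal.tsum_le_tsum fun i => OuterMeasure.ofFunction_le _)).trans_lt hN
  have hBU : B ⊆ U := iUnion₂_subset fun i _ => subset_iUnion f i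
  refine ⟨B, hC.biUnion_mem _ fun i _ => hfC i, ?_⟩
  calc ν (B ∆ E) ≤ ν (U \ E) + ν (U \ B) :=
        (measure_mono (union_subset_union (sdiff_subset_sdiff_left hBU)
          (sdiff_subset_sdiff_left hEU))).trans (measure_union_le _ _)
    _ < ε / 2 + ε / 2 := ENNReal.add_lt_add hUE hUB
    _ = ε := ENNReal.add_halves ε

theorem isCaratheodory_ofFunction_iff_exists_tendsto_symmDiff (hC : IsSetRing C)
    (m_top : ∀ s ∉ C, m s = ∞) {E : Set α} (hνE : ν E ≠ ∞) :
    OuterMeasure.IsCaratheodory ν E ↔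
      ∃ B : ℕ → Set α, (∀ n, B n ∈ C) ∧ Tendsto (fun n => ν (B n ∆ E)) atTop (𝓝 0) := by
  refine ⟨fun hE => ?_, fun ⟨B, hBC, hB⟩ => ?_⟩
  · choose B hBC hB using fun n : ℕ => m.exists_mem_ofFunction_symmDiff_lt hC m_top hE hνE
      (ENNReal.inv_ne_zero.2 (ENNReal.natCast_ne_top n))
    exact ⟨B, hBC, tendsto_of_tendsto_of_tendsto_of_le_of_le tendsto_const_nhds
      ENNReal.tendsto_inv_nat_nhds_zero (fun _ => zero_le) fun n => (hB n).le⟩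
  · exact OuterMeasure.isCaratheodory_of_tendsto_symmDiff _
      (fun n => isCaratheodory_ofFunction_of_mem hC.isSetSemiring m m_top (hBC n)) hB

end AddContent

end MeasureTheory

open MeasureTheory

theorem muStar_eq_ofFunction_extend {X : Type*} {Ω : Set (Set X)} (hΩ : IsSetSemiring Ω)
    (m : AddContent ℝ≥0∞ Ω) :
    muStar Ω m = OuterMeasure.ofFunction (m.extend hΩ) addContent_empty := by
  ext s
  rw [OuterMeasure.ofFunction_eq_iInf_mem _ _ fun _ => m.extend_eq_top hΩ]
  refine iInf_congr fun f => iInf_congr fun hf => iInf_congr fun _ => ?_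
  exact tsum_congr fun i => (m.extend_eq hΩ (hf i)).symm

theorem stmt_15_general {X : Type*} (Ω : Set (Set X)) (μ : Set X → ℝ≥0∞)
    (hΩempty : ∅ ∈ Ω)
    (hΩcompl : ∀ A ∈ Ω, Aᶜ ∈ Ω) (hΩunion : ∀ A ∈ Ω, ∀ B ∈ Ω, A ∪ B ∈ Ω)
    (hμempty : μ ∅ = 0) (hμfin : μ Set.univ < ⊤)
    (hμadd : ∀ A : ℕ → Set X, (∀ i, A i ∈ Ω) → Pairwise (Function.onFun Disjoint A) →
      (⋃ i, A i) ∈ Ω → μ (⋃ i, A i) = ∑' i, μ (A i))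
    (E : Set X) :
    (∀ A : Set X, muStar Ω μ A = muStar Ω μ (A ∩ E) + muStar Ω μ (A ∩ Eᶜ)) ↔
      E ∈ Stilde Ω μ := by
  have hΩ : IsSetAlgebra Ω :=
    ⟨hΩempty, fun s hs => hΩcompl s hs, fun s t hs ht => hΩunion s hs t ht⟩
  let m : AddContent ℝ≥0∞ Ω := hΩ.isSetRing.addContent_of_union μ hμempty fun hs ht hd =>
    union_eq_add_of_iUnion_eq_tsum hΩempty hμempty hμadd hs ht (hΩunion _ hs _ ht) hd
  let m' := m.extend hΩ.isSetRing.isSetSemiring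
  have hμ : muStar Ω μ = OuterMeasure.ofFunction m' addContent_empty :=
    muStar_eq_ofFunction_extend _ m
  have hE : OuterMeasure.ofFunction m' addContent_empty E ≠ ∞ :=
    ((measure_mono (subset_univ E)).trans (OuterMeasure.ofFunction_le _)).trans_lt
      (by rwa [m.extend_eq _ hΩ.univ_mem]) |>.ne
  simp only [← sdiff_eq, Stilde, mem_ofPred_eq, hμ]
  exact m'.isCaratheodory_ofFunction_iff_exists_tendsto_symmDiff hΩ.isSetRing
    (fun _ => m.extend_eq_top _) hE

/-- `E ⊆ X` is Caratheodory measurable with respect to `μ*` iff `E ∈ S̃`. -/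
theorem stmt_15 {X : Type*} (Ω : Set (Set X)) (μ : Set X → ℝ≥0∞)
    (hΩempty : ∅ ∈ Ω) (hΩuniv : Set.univ ∈ Ω)
    (hΩcompl : ∀ A ∈ Ω, Aᶜ ∈ Ω) (hΩunion : ∀ A ∈ Ω, ∀ B ∈ Ω, A ∪ B ∈ Ω)
    (hμempty : μ ∅ = 0) (hμfin : μ Set.univ < ⊤)
    (hμadd : ∀ A : ℕ → Set X, (∀ i, A i ∈ Ω) → Pairwise (Function.onFun Disjoint A) →
      (⋃ i, A i) ∈ Ω → μ (⋃ i, A i) = ∑' i, μ (A i))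
    (E : Set X) :
    (∀ A : Set X, muStar Ω μ A = muStar Ω μ (A ∩ E) + muStar Ω μ (A ∩ Eᶜ)) ↔
      E ∈ Stilde Ω μ :=
  stmt_15_general Ω μ hΩempty hΩcompl hΩunion hμempty hμfin hμadd E
end
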